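/- Erasure commutes with substitution: for the type erasure function ⌊-⌋ from λ_{[]⟨⟩}^{≤full} to untyped λ_{[]⟨⟩}, and the structural preorder ⊑ on untyped terms allowing records to contain extra fields, if Δ;Γ,x:A ⊢ M : B and Δ;Γ ⊢ N : A, and M' ⊑ ⌊M⌋ and N' ⊑ ⌊N⌋, then M'[N'/x] ⊑ ⌊M[N/x]⌋. -/

import Mathlib

namespace Stmt12

abbrev Label := ℕ

/-- Types of λ_{[]⟨⟩}^{≤full}. -/
inductive Ty : Type where
  | tvar : ℕ → Ty
  | arrow : Ty → Ty → Ty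
  | variant : List (Label × Ty) → Ty
  | record : List (Label × Ty) → Ty

/-- Full structural subtyping: covariant in variants, records and codomains,
contravariant in function domains. -/
inductive Sub : Ty → Ty → Prop where
  | tvar (n : ℕ) : Sub (.tvar n) (.tvar n)
  | arrow {A A' B B'} : Sub A' A → Sub B B' → Sub (.arrow A B) (.arrow A' B')
  | variant {R R'} :
      (∀ ℓ A, List.lookup ℓ R = some A → ∃ A', List.lookup ℓ R' = some A') →
      (∀ ℓ A A', List.lookup ℓ R = some A → List.lookup ℓ R' = some A' → Sub A A') →
      Sub (.variant R) (.variant R')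
  | record {R R'} :
      (∀ ℓ A', List.lookup ℓ R' = some A' → ∃ A, List.lookup ℓ R = some A) →
      (∀ ℓ A A', List.lookup ℓ R = some A → List.lookup ℓ R' = some A' → Sub A A') →
      Sub (.record R) (.record R')

/-- Typed terms; `upcast M A` is the explicit upcast M ▷ A. -/
inductive Tm : Type where
  | var : ℕ → Tm
  | lam : Ty → Tm → Tm
  | app : Tm → Tm → Tm
  | inj : Label → Tm → Ty → Tm
  | case : Tm → List (Label × Tm) → Tm
  | record : List (Label × Tm) → Tm
  | proj : Tm → Label → Tm
  | upcast : Tm → Ty → Tm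

mutual
def shiftTm (c : ℕ) : Tm → Tm
  | .var n => if n < c then .var n else .var (n + 1)
  | .lam A M => .lam A (shiftTm (c + 1) M)
  | .app M N => .app (shiftTm c M) (shiftTm c N)
  | .inj ℓ M A => .inj ℓ (shiftTm c M) A
  | .case M Bs => .case (shiftTm c M) (shiftLs (c + 1) Bs)
  | .record es => .record (shiftLs c es)
  | .proj M ℓ => .proj (shiftTm c M) ℓ
  | .upcast M A => .upcast (shiftTm c M) A
def shiftLs (c : ℕ) : List (Label × Tm) → List (Label × Tm)
  | [] => []
  | (ℓ, M) :: es => (ℓ, shiftTm c M) :: shiftLs c es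
end

mutual
/-- Capture-avoiding substitution of N for de Bruijn index k. -/
def substTm (k : ℕ) (N : Tm) : Tm → Tm
  | .var n => if n = k then N else if n < k then .var n else .var (n - 1)
  | .lam A M => .lam A (substTm (k + 1) (shiftTm 0 N) M)
  | .app M₁ M₂ => .app (substTm k N M₁) (substTm k N M₂)
  | .inj ℓ M A => .inj ℓ (substTm k N M) A
  | .case M Bs => .case (substTm k N M) (substLs (k + 1) (shiftTm 0 N) Bs)
  | .record es => .record (substLs k N es)
  | .proj M ℓ => .proj (substTm k N M) ℓ
  | .upcast M A => .upcast (substTm k N M) A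
def substLs (k : ℕ) (N : Tm) : List (Label × Tm) → List (Label × Tm)
  | [] => []
  | (ℓ, M) :: es => (ℓ, substTm k N M) :: substLs k N es
end

mutual
/-- Replace each occurrence of variable k by (var k ▷ A), keeping binders. -/
def replaceUp (A : Ty) (k : ℕ) : Tm → Tm
  | .var n => if n = k then .upcast (.var n) A else .var n
  | .lam B M => .lam B (replaceUp A (k + 1) M)
  | .app M N => .app (replaceUp A k M) (replaceUp A k N)
  | .inj ℓ M B => .inj ℓ (replaceUp A k M) B
  | .case M Bs => .case (replaceUp A k M) (replaceUpLs A (k + 1) Bs)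
  | .record es => .record (replaceUpLs A k es)
  | .proj M ℓ => .proj (replaceUp A k M) ℓ
  | .upcast M B => .upcast (replaceUp A k M) B
def replaceUpLs (A : Ty) (k : ℕ) : List (Label × Tm) → List (Label × Tm)
  | [] => []
  | (ℓ, M) :: es => (ℓ, replaceUp A k M) :: replaceUpLs A k es
end

/-- Typing of λ_{[]⟨⟩}^{≤full}. -/
inductive HasTy : List Ty → Tm → Ty → Prop where
  | var {Γ n A} : Γ[n]? = some A → HasTy Γ (.var n) A
  | lam {Γ A B M} : HasTy (A :: Γ) M B → HasTy Γ (.lam A M) (.arrow A B)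
  | app {Γ A B M N} : HasTy Γ M (.arrow A B) → HasTy Γ N A → HasTy Γ (.app M N) B
  | inj {Γ ℓ R A M} : List.lookup ℓ R = some A → HasTy Γ M A →
      HasTy Γ (.inj ℓ M (.variant R)) (.variant R)
  | case {Γ R M Bs C} : HasTy Γ M (.variant R) →
      (∀ ℓ A, List.lookup ℓ R = some A → (List.lookup ℓ Bs).isSome) →
      (∀ ℓ A N, List.lookup ℓ R = some A → List.lookup ℓ Bs = some N →
        HasTy (A :: Γ) N C) →
      HasTy Γ (.case M Bs) C
  | record {Γ} {es : List (Label × Tm)} {R : List (Label × Ty)} :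
      es.map Prod.fst = R.map Prod.fst →
      (∀ (i : ℕ) p q, es[i]? = some p → R[i]? = some q →
        HasTy Γ (Prod.snd p) (Prod.snd q)) →
      HasTy Γ (.record es) (.record R)
  | proj {Γ R M ℓ A} : HasTy Γ M (.record R) → List.lookup ℓ R = some A →
      HasTy Γ (.proj M ℓ) A
  | upcast {Γ M A B} : HasTy Γ M A → Sub A B → HasTy Γ (.upcast M B) B

/-! ### Untyped terms, erasure, and the record-width preorder ⊑. -/

/-- Untyped λ_{[]⟨⟩} terms. -/
inductive UTm : Type where
  | var : ℕ → UTm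
  | lam : UTm → UTm
  | app : UTm → UTm → UTm
  | inj : Label → UTm → UTm
  | case : UTm → List (Label × UTm) → UTm
  | record : List (Label × UTm) → UTm
  | proj : UTm → Label → UTm

mutual
def shiftU (c : ℕ) : UTm → UTm
  | .var n => if n < c then .var n else .var (n + 1)
  | .lam M => .lam (shiftU (c + 1) M)
  | .app M N => .app (shiftU c M) (shiftU c N)
  | .inj ℓ M => .inj ℓ (shiftU c M)
  | .case M Bs => .case (shiftU c M) (shiftULs (c + 1) Bs)
  | .record es => .record (shiftULs c es)
  | .proj M ℓ => .proj (shiftU c M) ℓ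
def shiftULs (c : ℕ) : List (Label × UTm) → List (Label × UTm)
  | [] => []
  | (ℓ, M) :: es => (ℓ, shiftU c M) :: shiftULs c es
end

mutual
/-- Capture-avoiding substitution on untyped terms. -/
def substU (k : ℕ) (N : UTm) : UTm → UTm
  | .var n => if n = k then N else if n < k then .var n else .var (n - 1)
  | .lam M => .lam (substU (k + 1) (shiftU 0 N) M)
  | .app M₁ M₂ => .app (substU k N M₁) (substU k N M₂)
  | .inj ℓ M => .inj ℓ (substU k N M)
  | .case M Bs => .case (substU k N M) (substULs (k + 1) (shiftU 0 N) Bs)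
  | .record es => .record (substULs k N es)
  | .proj M ℓ => .proj (substU k N M) ℓ
def substULs (k : ℕ) (N : UTm) : List (Label × UTm) → List (Label × UTm)
  | [] => []
  | (ℓ, M) :: es => (ℓ, substU k N M) :: substULs k N es
end

mutual
/-- Type erasure: drop upcasts and all type annotations. -/
def erase : Tm → UTm
  | .var n => .var n
  | .lam _ M => .lam (erase M)
  | .app M N => .app (erase M) (erase N)
  | .inj ℓ M _ => .inj ℓ (erase M)
  | .case M Bs => .case (erase M) (eraseLs Bs)
  | .record es => .record (eraseLs es)
  | .proj M ℓ => .proj (erase M) ℓ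
  | .upcast M _ => erase M
def eraseLs : List (Label × Tm) → List (Label × UTm)
  | [] => []
  | (ℓ, M) :: es => (ℓ, erase M) :: eraseLs es
end

/-- The preorder ⊑ on untyped terms: a record on the left may have extra
fields; congruent on all other constructs. -/
inductive Sqsub : UTm → UTm → Prop where
  | var (n : ℕ) : Sqsub (.var n) (.var n)
  | lam {M M'} : Sqsub M M' → Sqsub (.lam M) (.lam M')
  | app {M M' N N'} : Sqsub M M' → Sqsub N N' → Sqsub (.app M N) (.app M' N')
  | inj {ℓ M M'} : Sqsub M M' → Sqsub (.inj ℓ M) (.inj ℓ M')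
  | case {M M' Bs Bs'} : Sqsub M M' →
      Bs.map Prod.fst = Bs'.map Prod.fst →
      (∀ (i : ℕ) p q, Bs[i]? = some p → Bs'[i]? = some q →
        Sqsub (Prod.snd p) (Prod.snd q)) →
      Sqsub (.case M Bs) (.case M' Bs')
  | proj {M M' ℓ} : Sqsub M M' → Sqsub (.proj M ℓ) (.proj M' ℓ)
  | record {es es'} :
      (∀ ℓ N, List.lookup ℓ es' = some N → (List.lookup ℓ es).isSome) →
      (∀ ℓ M N, List.lookup ℓ es = some M → List.lookup ℓ es' = some N →
        Sqsub M N) →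
      Sqsub (.record es) (.record es')

/-! ### Reduction. -/

/-- β base rules on typed terms. -/
inductive Beta : Tm → Tm → Prop where
  | lam {A M N} : Beta (.app (.lam A M) N) (substTm 0 N M)
  | case {ℓ M A Bs N} : List.lookup ℓ Bs = some N →
      Beta (.case (.inj ℓ M A) Bs) (substTm 0 M N)
  | proj {es ℓ M} : List.lookup ℓ es = some M → Beta (.proj (.record es) ℓ) M

/-- Upcast base rules: upcasts are pushed through values. -/
inductive Up : Tm → Tm → Prop where
  | tvar {M n} : Up (.upcast M (.tvar n)) M
  | lam {A M A' B'} :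
      Up (.upcast (.lam A M) (.arrow A' B'))
         (.lam A' (.upcast (replaceUp A 0 M) B'))
  | inj {ℓ M A R Aℓ} : List.lookup ℓ R = some Aℓ →
      Up (.upcast (.inj ℓ M A) (.variant R))
         (.inj ℓ (.upcast M Aℓ) (.variant R))
  | record {es : List (Label × Tm)} {R : List (Label × Ty)} {Ns : List (Label × Tm)} :
      Ns.map Prod.fst = R.map Prod.fst →
      (∀ (i : ℕ) q r, R[i]? = some q → Ns[i]? = some r →
        ∃ M, List.lookup (Prod.fst q) es = some M ∧
          Prod.snd r = Tm.upcast M (Prod.snd q)) →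
      Up (.upcast (.record es) (.record R)) (.record Ns)

/-- Compatible closure of a base reduction relation on typed terms. -/
inductive Compat (r : Tm → Tm → Prop) : Tm → Tm → Prop where
  | base {M N} : r M N → Compat r M N
  | lam {A M M'} : Compat r M M' → Compat r (.lam A M) (.lam A M')
  | appL {M M' N} : Compat r M M' → Compat r (.app M N) (.app M' N)
  | appR {M N N'} : Compat r N N' → Compat r (.app M N) (.app M N')
  | inj {ℓ M M' A} : Compat r M M' → Compat r (.inj ℓ M A) (.inj ℓ M' A)
  | caseScrut {M M' Bs} : Compat r M M' → Compat r (.case M Bs) (.case M' Bs)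
  | caseBranch {M Bs₁ Bs₂ ℓ N N'} : Compat r N N' →
      Compat r (.case M (Bs₁ ++ (ℓ, N) :: Bs₂)) (.case M (Bs₁ ++ (ℓ, N') :: Bs₂))
  | recordField {es₁ es₂ ℓ M M'} : Compat r M M' →
      Compat r (.record (es₁ ++ (ℓ, M) :: es₂)) (.record (es₁ ++ (ℓ, M') :: es₂))
  | proj {M M' ℓ} : Compat r M M' → Compat r (.proj M ℓ) (.proj M' ℓ)
  | upcast {M M' A} : Compat r M M' → Compat r (.upcast M A) (.upcast M' A)

/-- β base rules on untyped terms. -/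
inductive UBeta : UTm → UTm → Prop where
  | lam {M N} : UBeta (.app (.lam M) N) (substU 0 N M)
  | case {ℓ M Bs N} : List.lookup ℓ Bs = some N →
      UBeta (.case (.inj ℓ M) Bs) (substU 0 M N)
  | proj {es ℓ M} : List.lookup ℓ es = some M → UBeta (.proj (.record es) ℓ) M

/-- Compatible closure on untyped terms. -/
inductive UCompat (r : UTm → UTm → Prop) : UTm → UTm → Prop where
  | base {M N} : r M N → UCompat r M N
  | lam {M M'} : UCompat r M M' → UCompat r (.lam M) (.lam M')
  | appL {M M' N} : UCompat r M M' → UCompat r (.app M N) (.app M' N)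
  | appR {M N N'} : UCompat r N N' → UCompat r (.app M N) (.app M N')
  | inj {ℓ M M'} : UCompat r M M' → UCompat r (.inj ℓ M) (.inj ℓ M')
  | caseScrut {M M' Bs} : UCompat r M M' → UCompat r (.case M Bs) (.case M' Bs)
  | caseBranch {M Bs₁ Bs₂ ℓ N N'} : UCompat r N N' →
      UCompat r (.case M (Bs₁ ++ (ℓ, N) :: Bs₂)) (.case M (Bs₁ ++ (ℓ, N') :: Bs₂))
  | recordField {es₁ es₂ ℓ M M'} : UCompat r M M' →
      UCompat r (.record (es₁ ++ (ℓ, M) :: es₂)) (.record (es₁ ++ (ℓ, M') :: es₂))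
  | proj {M M' ℓ} : UCompat r M M' → UCompat r (.proj M ℓ) (.proj M' ℓ)

/-!
Erasure is a homomorphism that commutes with de Bruijn shifting, hence with substitution, so
`⌊M[N/x]⌋ = ⌊M⌋[⌊N⌋/x]`. The preorder `⊑` is a congruence that is stable under shifting, hence
substituting `N' ⊑ ⌊N⌋` into `M' ⊑ ⌊M⌋` gives `M'[N'/x] ⊑ ⌊M⌋[⌊N⌋/x]`.
-/

theorem lookup_map_snd {κ α β : Type*} [BEq κ] (f : α → β) (k : κ) :
    ∀ es : List (κ × α),
      List.lookup k (es.map fun p => (p.1, f p.2)) = (List.lookup k es).map f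
  | [] => rfl
  | (k', a) :: es => by
      simp only [List.map_cons, List.lookup]
      cases k == k' <;> simp [lookup_map_snd f k es]

theorem shiftULs_eq_map (c : ℕ) :
    ∀ es : List (Label × UTm), shiftULs c es = es.map fun p => (p.1, shiftU c p.2)
  | [] => rfl
  | (ℓ, M) :: es => by simp [shiftULs, shiftULs_eq_map c es]

theorem substULs_eq_map (k : ℕ) (N : UTm) :
    ∀ es : List (Label × UTm), substULs k N es = es.map fun p => (p.1, substU k N p.2)
  | [] => rfl
  | (ℓ, M) :: es => by simp [substULs, substULs_eq_map k N es]

namespace Sqsub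

theorem case_map {M M' : UTm} {Bs Bs' : List (Label × UTm)} {f g : UTm → UTm}
    (hM : Sqsub M M') (hlabels : Bs.map Prod.fst = Bs'.map Prod.fst)
    (hbranch : ∀ (i : ℕ) p q, Bs[i]? = some p → Bs'[i]? = some q → Sqsub (f p.2) (g q.2)) :
    Sqsub (.case M (Bs.map fun p => (p.1, f p.2))) (.case M' (Bs'.map fun p => (p.1, g p.2))) := by
  refine .case hM (by simp only [List.map_map]; exact hlabels) fun i p q hp hq => ?_
  simp only [List.getElem?_map] at hp hq
  obtain ⟨p₀, hp₀, rfl⟩ := Option.map_eq_some_iff.1 hp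
  obtain ⟨q₀, hq₀, rfl⟩ := Option.map_eq_some_iff.1 hq
  exact hbranch i p₀ q₀ hp₀ hq₀

theorem record_map {es es' : List (Label × UTm)} {f g : UTm → UTm}
    (hfields : ∀ ℓ N, List.lookup ℓ es' = some N → (List.lookup ℓ es).isSome)
    (hfield : ∀ ℓ M N, List.lookup ℓ es = some M → List.lookup ℓ es' = some N →
      Sqsub (f M) (g N)) :
    Sqsub (.record (es.map fun p => (p.1, f p.2))) (.record (es'.map fun p => (p.1, g p.2))) := by
  refine .record (fun ℓ N hN => ?_) fun ℓ M N hM hN => ?_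
  · rw [lookup_map_snd] at hN ⊢
    obtain ⟨N₀, hN₀, -⟩ := Option.map_eq_some_iff.1 hN
    simpa using hfields ℓ N₀ hN₀
  · rw [lookup_map_snd] at hM hN
    obtain ⟨M₀, hM₀, rfl⟩ := Option.map_eq_some_iff.1 hM
    obtain ⟨N₀, hN₀, rfl⟩ := Option.map_eq_some_iff.1 hN
    exact hfield ℓ M₀ N₀ hM₀ hN₀

theorem shift {M M' : UTm} (h : Sqsub M M') (c : ℕ) : Sqsub (shiftU c M) (shiftU c M') := by
  induction h generalizing c with
  | var n => simp only [shiftU]; split <;> exact .var _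
  | lam _ ih => exact .lam (ih (c + 1))
  | app _ _ ih₁ ih₂ => exact .app (ih₁ c) (ih₂ c)
  | inj _ ih => exact .inj (ih c)
  | proj _ ih => exact .proj (ih c)
  | case _ hlabels _ ihM ihBs =>
      simp only [shiftU, shiftULs_eq_map]
      exact (ihM c).case_map hlabels fun i p q hp hq => ihBs i p q hp hq (c + 1)
  | record hfields _ ihs =>
      simp only [shiftU, shiftULs_eq_map]
      exact record_map hfields fun ℓ M N hM hN => ihs ℓ M N hM hN c

theorem subst {M M' N N' : UTm} (hM : Sqsub M M') (hN : Sqsub N N') (k : ℕ) :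
    Sqsub (substU k N M) (substU k N' M') := by
  induction hM generalizing k N N' with
  | var n =>
      simp only [substU]
      split_ifs
      · exact hN
      all_goals exact .var _
  | lam _ ih => exact .lam (ih (hN.shift 0) (k + 1))
  | app _ _ ih₁ ih₂ => exact .app (ih₁ hN k) (ih₂ hN k)
  | inj _ ih => exact .inj (ih hN k)
  | proj _ ih => exact .proj (ih hN k)
  | case _ hlabels _ ihM ihBs =>
      simp only [substU, substULs_eq_map]
      exact (ihM hN k).case_map hlabels fun i p q hp hq =>
        ihBs i p q hp hq (hN.shift 0) (k + 1)
  | record hfields _ ihs =>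
      simp only [substU, substULs_eq_map]
      exact record_map hfields fun ℓ M N hM hN' => ihs ℓ M N hM hN' hN k

end Sqsub

mutual
theorem erase_shiftTm (c : ℕ) : ∀ M : Tm, erase (shiftTm c M) = shiftU c (erase M)
  | .var n => by simp only [shiftTm]; split <;> simp [erase, shiftU, *]
  | .lam A M => by simp [shiftTm, erase, shiftU, erase_shiftTm (c + 1) M]
  | .app M N => by simp [shiftTm, erase, shiftU, erase_shiftTm c M, erase_shiftTm c N]
  | .inj ℓ M A => by simp [shiftTm, erase, shiftU, erase_shiftTm c M]
  | .case M Bs => by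
      simp [shiftTm, erase, shiftU, erase_shiftTm c M, eraseLs_shiftLs (c + 1) Bs]
  | .record es => by simp [shiftTm, erase, shiftU, eraseLs_shiftLs c es]
  | .proj M ℓ => by simp [shiftTm, erase, shiftU, erase_shiftTm c M]
  | .upcast M A => by simp [shiftTm, erase, erase_shiftTm c M]
theorem eraseLs_shiftLs (c : ℕ) :
    ∀ es : List (Label × Tm), eraseLs (shiftLs c es) = shiftULs c (eraseLs es)
  | [] => rfl
  | (ℓ, M) :: es => by
      simp [shiftLs, eraseLs, shiftULs, erase_shiftTm c M, eraseLs_shiftLs c es]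
end

mutual
theorem erase_substTm (k : ℕ) (N : Tm) :
    ∀ M : Tm, erase (substTm k N M) = substU k (erase N) (erase M)
  | .var n => by simp only [substTm]; split_ifs <;> simp [erase, substU, *]
  | .lam A M => by
      simp [substTm, erase, substU, erase_substTm (k + 1) (shiftTm 0 N) M, erase_shiftTm 0 N]
  | .app M₁ M₂ => by
      simp [substTm, erase, substU, erase_substTm k N M₁, erase_substTm k N M₂]
  | .inj ℓ M A => by simp [substTm, erase, substU, erase_substTm k N M]
  | .case M Bs => by
      simp [substTm, erase, substU, erase_substTm k N M,
        eraseLs_substLs (k + 1) (shiftTm 0 N) Bs, erase_shiftTm 0 N]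
  | .record es => by simp [substTm, erase, substU, eraseLs_substLs k N es]
  | .proj M ℓ => by simp [substTm, erase, substU, erase_substTm k N M]
  | .upcast M A => by simp [substTm, erase, erase_substTm k N M]
theorem eraseLs_substLs (k : ℕ) (N : Tm) :
    ∀ es : List (Label × Tm), eraseLs (substLs k N es) = substULs k (erase N) (eraseLs es)
  | [] => rfl
  | (ℓ, M) :: es => by
      simp [substLs, eraseLs, substULs, erase_substTm k N M, eraseLs_substLs k N es]
end

theorem erasure_commutes_with_substitution
    {Γ : List Ty} {A B : Ty} {M N : Tm} {M' N' : UTm}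
    (hM : HasTy (A :: Γ) M B) (hN : HasTy Γ N A)
    (hM' : Sqsub M' (erase M)) (hN' : Sqsub N' (erase N)) :
    Sqsub (substU 0 N' M') (erase (substTm 0 N M)) := by
  rw [erase_substTm]
  exact hM'.subst hN' 0

end Stmt12
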